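/- arXiv:1906.10527 — 4 statements merged into one kernel-verified Lean document; each statement's English description precedes it below -/
import Mathlib

section
/- For a weighted level tree 𝔱 with m = m(𝔱) < 0 and each level i with m ≤ i < 0, let 𝔈_i = {e ∈ Edg(𝔱) : max(ℓ(v_e^-), m) ≤ i < ℓ(v_e^+)}; then every path from the root o to a minimal vertex v with ℓ(v) ≤ i contains exactly one edge of 𝔈_i. -/
open SimpleGraph

variable {V : Type*}

/-- Tree order on the vertices of a rooted tree: `v ≻ v'` iff `v ≠ v'` and `v` lies on
the (unique) path from the root `o` to `v'`. -/
def TreeGT (G : SimpleGraph V) (o v v' : V) : Prop :=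
  v ≠ v' ∧ ∀ p : G.Path o v', v ∈ (p : G.Walk o v').support

/-- A weighted level tree structure on the rooted tree `(G, o)`: a nonnegative weight
function (with at least one positive weight) and a level map `lv : V → ℝ≤0` which is
strictly decreasing along the tree order and vanishes exactly at the root. -/
structure LevelData (G : SimpleGraph V) (o : V) where
  wt : V → ℕ
  lv : V → ℝ
  lv_nonpos : ∀ v, lv v ≤ 0
  lv_mono : ∀ v v', TreeGT G o v v' → lv v' < lv v
  lv_zero : ∀ v, lv v = 0 ↔ v = o
  exists_pos : ∃ v, 0 < wt v

/-- `m(𝔱)`: the maximal level of a positively weighted vertex. -/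
noncomputable def mval {G : SimpleGraph V} {o : V} (T : LevelData G o) : ℝ :=
  sSup {x | ∃ v, 0 < T.wt v ∧ T.lv v = x}

/-- Equivalence of weighted level trees (on the same rooted tree): same weights, and
the relative positions of vertices at or above level `m(𝔱)` agree. -/
def WLTEquiv {G : SimpleGraph V} {o : V} (T T' : LevelData G o) : Prop :=
  T.wt = T'.wt ∧
  (∀ v u, T.lv v = T.lv u → mval T ≤ T.lv v → T'.lv v = T'.lv u) ∧
  (∀ v u, T.lv u < T.lv v → mval T ≤ T.lv v → T'.lv u < T'.lv v)

/-- Membership of an edge in `𝔈ᵢ`: the edge is `s(a, b)` with `a ≻ b` and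
`max(ℓ(b), m) ≤ i < ℓ(a)`. -/
def InEi {G : SimpleGraph V} {o : V} (T : LevelData G o) (i : ℝ) (e : Sym2 V) : Prop :=
  ∃ a b, e = s(a, b) ∧ G.Adj a b ∧ TreeGT G o a b ∧
    max (T.lv b) (mval T) ≤ i ∧ i < T.lv a

section Aux

variable {G : SimpleGraph V} {o v : V}

lemma dart_path_aux :
    ∀ {x : V} (w : G.Walk x v) (pfx : G.Walk o x), (pfx.append w).IsPath →
      ∀ d ∈ w.darts, ∃ q : G.Walk o d.snd, q.IsPath ∧ d.fst ∈ q.support := by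
  intro x w
  induction w with
  | nil => intro pfx _ d hd; simp [Walk.darts] at hd
  | @cons a b c h w' ih =>
    intro pfx hp d hd
    have hps : (pfx.concat h).append w' = pfx.append (Walk.cons h w') := by
      rw [Walk.concat_eq_append, ← Walk.append_assoc, Walk.cons_nil_append]
    rw [Walk.darts_cons, List.mem_cons] at hd
    rcases hd with rfl | hd
    · refine ⟨pfx.concat h, ?_, ?_⟩
      · have : ((pfx.concat h).append w').IsPath := by rw [hps]; exact hp
        exact this.of_append_left
      · simp only [Walk.concat_eq_append, Walk.mem_support_append_iff]
        exact Or.inl pfx.end_mem_support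
    · exact ih (pfx.concat h) (by rw [hps]; exact hp) d hd

lemma dart_treeGT (hG : G.IsTree) (p : G.Walk o v) (hp : p.IsPath) {d : G.Dart}
    (hd : d ∈ p.darts) : TreeGT G o d.fst d.snd := by
  obtain ⟨q, hq, hfst⟩ := dart_path_aux p Walk.nil (by simpa using hp) d hd
  refine ⟨d.adj.ne, fun r => ?_⟩
  have := hG.IsAcyclic.path_unique ⟨q, hq⟩ r
  rw [← this]; exact hfst

lemma lv_le_of_mem (f : V → ℝ) :
    ∀ {y : V} (w : G.Walk y v), (∀ d ∈ w.darts, f d.snd ≤ f d.fst) →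
      ∀ z ∈ w.support, f z ≤ f y := by
  intro y w
  induction w with
  | nil => intro _ z hz; simp at hz; simp [hz]
  | @cons a b c h w' ih =>
    intro hdec z hz
    rw [Walk.support_cons, List.mem_cons] at hz
    rcases hz with rfl | hz
    · exact le_rfl
    · have h1 : f b ≤ f a := hdec ⟨(a, b), h⟩ (by simp [Walk.darts_cons])
      have h2 := ih (fun d hd => hdec d (by simp [Walk.darts_cons, hd])) z hz
      linarith

lemma dart_cross_unique (f : V → ℝ) (i : ℝ) :
    ∀ {x : V} (w : G.Walk x v), (∀ d ∈ w.darts, f d.snd < f d.fst) →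
      ∀ d₁ ∈ w.darts, ∀ d₂ ∈ w.darts,
        f d₁.snd ≤ i → i < f d₁.fst → f d₂.snd ≤ i → i < f d₂.fst → d₁ = d₂ := by
  intro x w
  induction w with
  | nil => intro _ d₁ hd₁; simp [Walk.darts] at hd₁
  | @cons a b c h w' ih =>
    intro hdec d₁ hd₁ d₂ hd₂ h₁s h₁f h₂s h₂f
    have hdec' : ∀ d ∈ w'.darts, f d.snd < f d.fst :=
      fun d hd => hdec d (by simp [Walk.darts_cons, hd])
    have key : ∀ d ∈ w'.darts, f d.snd ≤ i → i < f d.fst → f b ≤ i → False := by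
      intro d hd _ hf hb
      have : f d.fst ≤ f b :=
        lv_le_of_mem f w' (fun d hd => le_of_lt (hdec' d hd)) d.fst
          (Walk.dart_fst_mem_support_of_mem_darts w' hd)
      linarith
    rw [Walk.darts_cons, List.mem_cons] at hd₁ hd₂
    rcases hd₁ with rfl | hd₁ <;> rcases hd₂ with rfl | hd₂
    · rfl
    · exact absurd (key d₂ hd₂ h₂s h₂f h₁s) not_false
    · exact absurd (key d₁ hd₁ h₁s h₁f h₂s) not_false
    · exact ih hdec' d₁ hd₁ d₂ hd₂ h₁s h₁f h₂s h₂f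

lemma dart_cross_exists (f : V → ℝ) (i : ℝ) :
    ∀ {x : V} (w : G.Walk x v), f v ≤ i → i < f x →
      ∃ d ∈ w.darts, f d.snd ≤ i ∧ i < f d.fst := by
  intro x w
  induction w with
  | nil => intro h1 h2; exact absurd (lt_of_le_of_lt h1 h2) (lt_irrefl _)
  | @cons a b c h w' ih =>
    intro h1 h2
    by_cases hb : f b ≤ i
    · exact ⟨⟨(a, b), h⟩, by simp [Walk.darts_cons], hb, h2⟩
    · obtain ⟨d, hd, hds, hdf⟩ := ih h1 (lt_of_not_ge hb)
      exact ⟨d, by simp [Walk.darts_cons, hd], hds, hdf⟩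

end Aux

/-- For a weighted level tree with `m = m(𝔱) < 0` and a level `i` with `m ≤ i < 0`, the
set `𝔈ᵢ` is a traverse section: every path from the root to a minimal vertex `v` with
`ℓ(v) ≤ i` contains exactly one edge of `𝔈ᵢ`. -/

theorem stmt10 [Fintype V] (G : SimpleGraph V) (hG : G.IsTree) (o : V)
    (T : LevelData G o) (hm : mval T < 0) (i : ℝ) (hlev : ∃ v, T.lv v = i)
    (him : mval T ≤ i) (hi0 : i < 0) :
    ∀ v, (∀ u, ¬ TreeGT G o v u) → T.lv v ≤ i →
      ∀ p : G.Path o v, ∃! e, e ∈ (p : G.Walk o v).edges ∧ InEi T i e := by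
  intro v _ hv p
  have hp : (p : G.Walk o v).IsPath := p.2
  have hdec : ∀ d ∈ (p : G.Walk o v).darts, T.lv d.snd < T.lv d.fst :=
    fun d hd => T.lv_mono _ _ (dart_treeGT hG _ hp hd)
  have hlo : i < T.lv o := by rw [(T.lv_zero o).mpr rfl]; exact hi0
  obtain ⟨d, hd, hds, hdf⟩ := dart_cross_exists T.lv i (p : G.Walk o v) hv hlo
  refine ⟨d.edge, ⟨List.mem_map_of_mem hd,
    d.fst, d.snd, rfl, d.adj, dart_treeGT hG _ hp hd, max_le hds him, hdf⟩, ?_⟩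
  rintro e ⟨he, a, b, rfl, hadj, hgt, hmax, hlt⟩
  obtain ⟨d', hd', hde⟩ := List.mem_map.mp he
  have hb : T.lv b ≤ i := (max_le_iff.mp hmax).1
  have horient : d'.fst = a ∧ d'.snd = b := by
    have := hde
    replace this := (Sym2.mk_eq_mk_iff (p := d'.toProd) (q := (a, b))).mp this
    rcases this with h' | h'
    · exact ⟨congrArg Prod.fst h', congrArg Prod.snd h'⟩
    · exfalso
      have h1 : d'.fst = b := congrArg Prod.fst h'
      have h2 : d'.snd = a := congrArg Prod.snd h'
      have := T.lv_mono _ _ (dart_treeGT hG _ hp hd')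
      rw [h1, h2] at this
      linarith
  have : d' = d := by
    refine dart_cross_unique T.lv i (p : G.Walk o v) hdec d' hd' d hd ?_ ?_ hds hdf
    · rw [horient.2]; exact hb
    · rw [horient.1]; exact hlt
  rw [← hde, this]
end

section
/- Let 𝔱 be a weighted level tree and I ⊆ 𝕀(𝔱). Then 𝔱_{(I)} constructed by contracting the edges in Edg(𝔱)\Edg(𝔱_{(I)}) = {e ∈ (Êdg(𝔱)\𝕀_m) ⊔ I_m : [ℓ(e),ℓ(v_e^+)) ⊆ I_+} ⊔ I_-, with summed weights and the prescribed level map ℓ_{(I)}, is itself a weighted level tree; in particular ℓ_{(I)} satisfies the level map axioms: ℓ_{(I)}(v) > ℓ_{(I)}(v') whenever v ≻ v' in 𝔱_{(I)}, and ℓ_{(I)}^{-1}(0) = {o}. -/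
variable {V : Type*}

/-- `(root, parent)` is a rooted tree structure on `V`: the root is a fixed point of
`parent`, and every vertex reaches the root by iterating `parent`. Edges of the tree
correspond to the non-root vertices `v` (the edge `e_v` joining `v` to `parent v`, with
`v_e^- = v` and `v_e^+ = parent v`). -/
def IsRooted (root : V) (parent : V → V) : Prop :=
  parent root = root ∧ ∀ v, ∃ n, parent^[n] v = root

/-- A weighted level tree structure on the rooted tree `(root, parent)`: nonnegative
weights with at least one positive value, and a level map `lv : V → ℝ≤0` strictly
increasing along `parent` and vanishing exactly at the root. -/
structure LevelWt (root : V) (parent : V → V) where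
  wt : V → ℕ
  lv : V → ℝ
  lv_nonpos : ∀ v, lv v ≤ 0
  lv_lt : ∀ v, v ≠ root → lv v < lv (parent v)
  lv_zero : ∀ v, lv v = 0 ↔ v = root
  exists_pos : ∃ v, 0 < wt v

namespace LevelWt

variable {root : V} {parent : V → V}

/-- `m(𝔱)`: the maximal level of a positively weighted vertex. -/
noncomputable def m (T : LevelWt root parent) : ℝ :=
  sSup {x | ∃ v, 0 < T.wt v ∧ T.lv v = x}

/-- `𝕀₊(𝔱)`: the set of levels in `[m, 0)`. -/
def Iplus (T : LevelWt root parent) : Set ℝ :=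
  {x | (∃ v, T.lv v = x) ∧ T.m ≤ x ∧ x < 0}

/-- `Êdg(𝔱)`: edges `e_v` with `ℓ(v_e^+) > m`. -/
def hatEdg (T : LevelWt root parent) : Set V :=
  {v | v ≠ root ∧ T.m < T.lv (parent v)}

/-- `𝕀_m(𝔱)`: edges `e ∈ Êdg(𝔱)` with `ℓ(v_e^-) < m`. -/
def Imid (T : LevelWt root parent) : Set V :=
  {v | v ∈ T.hatEdg ∧ T.lv v < T.m}

/-- `𝕀₋(𝔱)`: edges not in `Êdg(𝔱)`. -/
def Iminus (T : LevelWt root parent) : Set V :=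
  {v | v ≠ root ∧ T.lv (parent v) ≤ T.m}

/-- The level `ℓ(e) = max(ℓ(v_e^-), m)` of an edge. -/
noncomputable def elv (T : LevelWt root parent) (v : V) : ℝ :=
  max (T.lv v) T.m

/-- The set of edges contracted in the construction of `𝔱_{(I)}`, for an index set
`I = I₊ ⊔ I_m ⊔ I₋`:
`{e ∈ (Êdg(𝔱) \ 𝕀_m) ⊔ I_m : [ℓ(e), ℓ(v_e^+)) ∩ ℓ(Ver 𝔱) ⊆ I₊} ⊔ I₋`. -/
def contrSet (T : LevelWt root parent) (Ip : Set ℝ) (Imm Imin : Set V) : Set V :=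
  {v | v ∈ (T.hatEdg \ T.Imid) ∪ Imm ∧
      ∀ x, (∃ u, T.lv u = x) → T.elv v ≤ x → x < T.lv (parent v) → x ∈ Ip} ∪ Imin

end LevelWt

/-- The contraction of the rooted tree `(root, parent)` along a set `C` of edges
(identified with their lower endpoints): a surjection `pr` onto a new rooted tree
`(root', parent')` whose fibers are exactly the chains of contracted edges. -/
structure Contr (root : V) (parent : V → V) (C : Set V) where
  V' : Type
  root' : V'
  parent' : V' → V'
  pr : V → V'
  surj : Function.Surjective pr
  pr_root : pr root = root'
  pr_eq_iff : ∀ v, v ≠ root → (pr v = pr (parent v) ↔ v ∈ C)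
  parent'_pr : ∀ v, v ≠ root → v ∉ C → parent' (pr v) = pr (parent v)
  parent'_root : parent' root' = root'

/-- The defining formulas for the level map `ℓ_{(I)}` of the contracted tree `𝔱_{(I)}`:
the root is at level `0`; a surviving edge in `Êdg(𝔱) \ 𝕀_m` is placed at the lowest
level of `𝕀₊ \ I₊` above its whole contracted fiber; an edge of `I_m` is lifted to
`min(𝕀₊ \ I₊)`; an edge of `(𝕀_m \ I_m) ⊔ 𝕀₋` keeps the maximal level of its fiber. -/
def LvSpec {root : V} {parent : V → V} (T : LevelWt root parent)
    (Ip : Set ℝ) (Imm : Set V) {C : Set V} (c : Contr root parent C)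
    (lv' : c.V' → ℝ) : Prop :=
  lv' c.root' = 0 ∧
  ∀ v, v ≠ root → v ∉ C →
    ((v ∈ T.hatEdg \ T.Imid →
        lv' (c.pr v) =
          sInf {x | x ∈ T.Iplus \ Ip ∧ ∀ u, c.pr u = c.pr v → T.lv u ≤ x}) ∧
     (v ∈ Imm → lv' (c.pr v) = sInf (T.Iplus \ Ip)) ∧
     (v ∈ (T.Imid \ Imm) ∪ T.Iminus →
        lv' (c.pr v) = sSup {x | ∃ u, c.pr u = c.pr v ∧ T.lv u = x}))

/-- The contracted tree `𝔱_{(I)}` is again a weighted level tree; in particular the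
prescribed level map `ℓ_{(I)}` satisfies the level map axioms: it is nonpositive,
strictly increasing along the parent map of the contracted tree, and vanishes exactly
at the root. -/
theorem stmt14 [Fintype V] {root : V} {parent : V → V}
    (hroot : IsRooted root parent) (T : LevelWt root parent)
    (Ip : Set ℝ) (Imm Imin : Set V)
    (hIp : Ip ⊆ T.Iplus) (hImm : Imm ⊆ T.Imid) (hImin : Imin ⊆ T.Iminus)
    {C : Set V} (hC : C = T.contrSet Ip Imm Imin)
    (c : Contr root parent C) (lv' : c.V' → ℝ)
    (hspec : LvSpec T Ip Imm c lv') :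
    (∀ v', lv' v' ≤ 0) ∧
    (∀ v', v' ≠ c.root' → lv' v' < lv' (c.parent' v')) ∧
    (∀ v', lv' v' = 0 ↔ v' = c.root') := by
  obtain ⟨hspec0, hspecF⟩ := hspec
  have key : ∀ v', v' ≠ c.root' →
      lv' v' < 0 ∧ (∀ u, c.pr u = v' → T.lv u ≤ lv' v') ∧
      ∃ t, t ≠ root ∧ c.pr t = v' ∧ lv' v' < T.lv (parent t) ∧
        c.parent' v' = c.pr (parent t) := by
    intro v' hv'
    obtain ⟨u0, hu0⟩ := c.surj v'
    have hLfin : {x | ∃ u, c.pr u = v' ∧ T.lv u = x}.Finite := by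
      apply (Set.finite_range T.lv).subset
      rintro x ⟨u, -, rfl⟩; exact ⟨u, rfl⟩
    have hLne : {x | ∃ u, c.pr u = v' ∧ T.lv u = x}.Nonempty := ⟨T.lv u0, u0, hu0, rfl⟩
    obtain ⟨t, hpt, hlt⟩ :
        ∃ t, c.pr t = v' ∧ T.lv t = sSup {x | ∃ u, c.pr u = v' ∧ T.lv u = x} :=
      hLne.csSup_mem hLfin
    have hub : ∀ u, c.pr u = v' → T.lv u ≤ T.lv t := by
      intro u hu
      rw [hlt]
      exact le_csSup hLfin.bddAbove ⟨u, hu, rfl⟩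
    have htroot : t ≠ root := by
      intro h; subst h; exact hv' (hpt.symm.trans c.pr_root)
    have htneg : T.lv t < 0 :=
      lt_of_le_of_ne (T.lv_nonpos t) (fun h => htroot ((T.lv_zero t).mp h))
    have htC : t ∉ C := by
      intro hC'
      have h1 : c.pr t = c.pr (parent t) := (c.pr_eq_iff t htroot).mpr hC'
      have h2 : c.pr (parent t) = v' := h1.symm.trans hpt
      exact absurd (T.lv_lt t htroot) (not_lt.mpr (hub (parent t) h2))
    obtain ⟨hA, hB, hD⟩ := hspecF t htroot htC
    rw [hpt] at hA hB hD
    have hpp : c.parent' v' = c.pr (parent t) := by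
      rw [← hpt]; exact c.parent'_pr t htroot htC
    have hfail : t ∈ (T.hatEdg \ T.Imid) ∪ Imm →
        ∃ x, (∃ u, T.lv u = x) ∧ T.elv t ≤ x ∧ x < T.lv (parent t) ∧ x ∉ Ip := by
      intro hmem
      have h0 : t ∉ T.contrSet Ip Imm Imin := by rw [← hC]; exact htC
      rw [LevelWt.contrSet, Set.mem_union, not_or] at h0
      obtain ⟨h1, -⟩ := h0
      rw [Set.mem_setOf_eq] at h1
      push_neg at h1
      exact h1 hmem
    have hxmem : ∀ x, (∃ u, T.lv u = x) → T.elv t ≤ x → x < T.lv (parent t) → x ∉ Ip →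
        x ∈ T.Iplus \ Ip := by
      intro x hx hex hxp hxip
      exact ⟨⟨hx, le_trans (le_max_right _ _) hex,
        lt_of_lt_of_le hxp (T.lv_nonpos _)⟩, hxip⟩
    have hIplusFin : T.Iplus.Finite := by
      apply (Set.finite_range T.lv).subset
      rintro x ⟨⟨u, rfl⟩, -, -⟩; exact ⟨u, rfl⟩
    by_cases hhat : t ∈ T.hatEdg
    · by_cases hmid : t ∈ T.Imid
      · by_cases himm : t ∈ Imm
        · -- case B : `t ∈ I_m`
          obtain ⟨x, hx1, hx2, hx3, hx4⟩ := hfail (Or.inr himm)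
          have hxD : x ∈ T.Iplus \ Ip := hxmem x hx1 hx2 hx3 hx4
          have hfin : (T.Iplus \ Ip).Finite := hIplusFin.subset Set.diff_subset
          have hval := hB himm
          have hmem' := Set.Nonempty.csInf_mem ⟨x, hxD⟩ hfin
          rw [← hval] at hmem'
          refine ⟨hmem'.1.2.2, ?_, t, htroot, hpt, ?_, hpp⟩
          · intro u hu
            exact le_trans (hub u hu) (le_trans (le_of_lt hmid.2) hmem'.1.2.1)
          · calc lv' v' ≤ x := by rw [hval]; exact csInf_le hfin.bddBelow hxD
              _ < T.lv (parent t) := hx3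
        · -- case D : `t ∈ 𝕀_m \ I_m`
          have hval := hD (Or.inl ⟨hmid, himm⟩)
          have hval' : lv' v' = T.lv t := hval.trans hlt.symm
          refine ⟨hval' ▸ htneg, ?_, t, htroot, hpt, ?_, hpp⟩
          · intro u hu; rw [hval']; exact hub u hu
          · rw [hval']; exact T.lv_lt t htroot
      · -- case A : `t ∈ Êdg \ 𝕀_m`
        obtain ⟨x, hx1, hx2, hx3, hx4⟩ := hfail (Or.inl ⟨hhat, hmid⟩)
        have hxD : x ∈ T.Iplus \ Ip := hxmem x hx1 hx2 hx3 hx4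
        have hxS : x ∈ {x | x ∈ T.Iplus \ Ip ∧ ∀ u, c.pr u = v' → T.lv u ≤ x} :=
          ⟨hxD, fun u hu => le_trans (hub u hu) (le_trans (le_max_left _ _) hx2)⟩
        have hfin : {x | x ∈ T.Iplus \ Ip ∧ ∀ u, c.pr u = v' → T.lv u ≤ x}.Finite := by
          apply hIplusFin.subset
          rintro y ⟨⟨hy, -⟩, -⟩; exact hy
        have hval := hA ⟨hhat, hmid⟩
        have hmem' := Set.Nonempty.csInf_mem ⟨x, hxS⟩ hfin
        rw [← hval] at hmem'
        refine ⟨hmem'.1.1.2.2, fun u hu => hmem'.2 u hu, t, htroot, hpt, ?_, hpp⟩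
        calc lv' v' ≤ x := by rw [hval]; exact csInf_le hfin.bddBelow hxS
          _ < T.lv (parent t) := hx3
    · -- case D : `t ∈ 𝕀₋`
      have hmin : t ∈ T.Iminus := ⟨htroot, by
        by_contra h
        exact hhat ⟨htroot, lt_of_not_ge h⟩⟩
      have hval := hD (Or.inr hmin)
      have hval' : lv' v' = T.lv t := hval.trans hlt.symm
      refine ⟨hval' ▸ htneg, ?_, t, htroot, hpt, ?_, hpp⟩
      · intro u hu; rw [hval']; exact hub u hu
      · rw [hval']; exact T.lv_lt t htroot
  have hneg : ∀ v', v' ≠ c.root' → lv' v' < 0 := fun v' h => (key v' h).1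
  refine ⟨?_, ?_, ?_⟩
  · intro v'
    by_cases h : v' = c.root'
    · rw [h, hspec0]
    · exact le_of_lt (hneg v' h)
  · intro v' h
    obtain ⟨h1, -, t, -, -, ht3, ht4⟩ := key v' h
    rw [ht4]
    by_cases hp : c.pr (parent t) = c.root'
    · rw [hp, hspec0]; exact h1
    · obtain ⟨-, h2', -⟩ := key _ hp
      exact lt_of_lt_of_le ht3 (h2' (parent t) rfl)
  · intro v'
    constructor
    · intro h0
      by_contra h
      exact absurd h0 (ne_of_lt (hneg v' h))
    · intro h; rw [h, hspec0]
end

section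
/- If 𝔱 ∼ 𝔱' are equivalent weighted level trees and I ⊆ 𝕀(𝔱), then 𝔱_{(I)} ∼ 𝔱'_{(φ_{𝔱',𝔱}(I))}, where φ_{𝔱',𝔱}(I) = ℓ'(ℓ^{-1}(I_+)) ⊔ I_m ⊔ I_-. -/
variable {V : Type*}

/-- If `𝔱 ∼ 𝔱'` are equivalent weighted level trees (on the same weighted tree) and
`I ⊆ 𝕀(𝔱)`, then `𝔱_{(I)} ∼ 𝔱'_{(φ(I))}`, where `φ_{𝔱',𝔱}(I) = ℓ'(ℓ⁻¹(I₊)) ⊔ I_m ⊔ I₋`: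
the same edges are contracted (so the two contractions can be realized by a common
contraction `c`), the contracted weight functions agree, and the prescribed level maps
`ℓ_{(I)}`, `ℓ'_{(φ(I))}` satisfy the equivalence conditions relative to
`m(𝔱_{(I)}) = min((𝕀₊ \ I₊) ⊔ {0})`. -/
theorem stmt15 [Fintype V] {root : V} {parent : V → V}
    (hroot : IsRooted root parent) (T T' : LevelWt root parent)
    (hw : T.wt = T'.wt)
    (hequiv :
      (∀ v u, T.lv v = T.lv u → T.m ≤ T.lv v → T'.lv v = T'.lv u) ∧
      (∀ v u, T.lv u < T.lv v → T.m ≤ T.lv v → T'.lv u < T'.lv v))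
    (Ip : Set ℝ) (Imm Imin : Set V)
    (hIp : Ip ⊆ T.Iplus) (hImm : Imm ⊆ T.Imid) (hImin : Imin ⊆ T.Iminus)
    (Ip' : Set ℝ) (hIp' : Ip' = {x | ∃ v, T.lv v ∈ Ip ∧ T'.lv v = x})
    {C : Set V} (hC : C = T.contrSet Ip Imm Imin)
    (c : Contr root parent C)
    (lv1 : c.V' → ℝ) (h1 : LvSpec T Ip Imm c lv1)
    (lv2 : c.V' → ℝ) (h2 : LvSpec T' Ip' Imm c lv2) :
    T'.contrSet Ip' Imm Imin = C ∧
    (∀ v' : c.V',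
      (∑ u : V, Set.indicator {u | c.pr u = v'} T.wt u) =
        ∑ u : V, Set.indicator {u | c.pr u = v'} T'.wt u) ∧
    (∀ a b : c.V', lv1 a = lv1 b → sInf ((T.Iplus \ Ip) ∪ {0}) ≤ lv1 a →
      lv2 a = lv2 b) ∧
    (∀ a b : c.V', lv1 b < lv1 a → sInf ((T.Iplus \ Ip) ∪ {0}) ≤ lv1 a →
      lv2 b < lv2 a) := by

  obtain ⟨heq, hlt⟩ := hequiv
  have hlvroot : T.lv root = 0 := (T.lv_zero root).mpr rfl
  have hlvroot' : T'.lv root = 0 := (T'.lv_zero root).mpr rfl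
  have hmfin : {x | ∃ v, 0 < T.wt v ∧ T.lv v = x}.Finite :=
    (Set.finite_range T.lv).subset (by rintro x ⟨v, -, h⟩; exact ⟨v, h⟩)
  have hmne : {x | ∃ v, 0 < T.wt v ∧ T.lv v = x}.Nonempty := by
    obtain ⟨v, hv⟩ := T.exists_pos; exact ⟨T.lv v, v, hv, rfl⟩
  obtain ⟨v0, hv0w, hv0⟩ : ∃ v, 0 < T.wt v ∧ T.lv v = T.m := hmne.csSup_mem hmfin
  have hm_le : ∀ v, 0 < T.wt v → T.lv v ≤ T.m := fun v hv =>
    le_csSup hmfin.bddAbove ⟨v, hv, rfl⟩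
  have hm0 : T.m ≤ T.lv v0 := hv0.ge
  have hmneg : T.m ≤ 0 := hv0 ▸ T.lv_nonpos v0
  have mle : ∀ v u, T.lv u ≤ T.lv v → T.m ≤ T.lv v → T'.lv u ≤ T'.lv v := by
    intro v u h hm
    rcases h.lt_or_eq with h | h
    · exact (hlt v u h hm).le
    · exact (heq u v h (by rw [h]; exact hm)).le
  have hv0' : T'.lv v0 = T'.m := by
    show T'.lv v0 = sSup {x | ∃ v, 0 < T'.wt v ∧ T'.lv v = x}
    have hgt : IsGreatest {x | ∃ v, 0 < T'.wt v ∧ T'.lv v = x} (T'.lv v0) := by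
      constructor
      · exact ⟨v0, by rw [← hw]; exact hv0w, rfl⟩
      · rintro x ⟨u, hu, rfl⟩
        rw [← hw] at hu
        exact mle v0 u (by rw [hv0]; exact hm_le u hu) hm0
    exact hgt.csSup_eq.symm
  have hmneg' : T'.m ≤ 0 := hv0' ▸ T'.lv_nonpos v0
  have f1 : ∀ v, T.m < T.lv v → T'.m < T'.lv v := by
    intro v h
    have := hlt v v0 (by rw [hv0]; exact h) h.le
    rwa [hv0'] at this
  have f2 : ∀ v, T.lv v < T.m → T'.lv v < T'.m := by
    intro v h
    have := hlt v0 v (by rw [hv0]; exact h) hm0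
    rwa [hv0'] at this
  have f3 : ∀ v, T.lv v = T.m → T'.lv v = T'.m := by
    intro v h
    have := heq v v0 (by rw [hv0, h]) h.ge
    rw [this, hv0']
  have hmm : ∀ v, T.m ≤ T.lv v ↔ T'.m ≤ T'.lv v := by
    intro v
    constructor
    · intro h
      rcases h.lt_or_eq with h | h
      · exact (f1 v h).le
      · exact (f3 v h.symm).ge
    · intro h
      by_contra hc
      exact absurd h (not_le.mpr (f2 v (not_le.mp hc)))
  have hmlt : ∀ v, T.m < T.lv v ↔ T'.m < T'.lv v := by
    intro v
    constructor
    · exact f1 v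
    · intro h
      rcases lt_trichotomy (T.lv v) T.m with hc | hc | hc
      · exact absurd (f2 v hc) (not_lt.mpr h.le)
      · exact absurd (f3 v hc) h.ne'
      · exact hc
  have hltm : ∀ v, T.lv v < T.m ↔ T'.lv v < T'.m := fun v => by
    rw [← not_le, ← not_le, hmm v]
  have hlem : ∀ v, T.lv v ≤ T.m ↔ T'.lv v ≤ T'.m := fun v => by
    rw [← not_lt, ← not_lt, hmlt v]
  have hnegv : ∀ v, T.lv v < 0 ↔ T'.lv v < 0 := by
    intro v
    rw [(T.lv_nonpos v).lt_iff_ne, (T'.lv_nonpos v).lt_iff_ne, ne_eq, ne_eq,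
      T.lv_zero, T'.lv_zero]
  have clt : ∀ v u, T'.lv u < T'.lv v → T.m ≤ T.lv v → T.lv u < T.lv v := by
    intro v u h hm
    by_contra hc
    push_neg at hc
    exact absurd (mle u v hc (hm.trans hc)) (not_le.mpr h)
  have ceq : ∀ v u, T'.lv v = T'.lv u → T.m ≤ T.lv v → T.lv v = T.lv u := by
    intro v u h hm
    rcases lt_trichotomy (T.lv v) (T.lv u) with hc | hc | hc
    · have := hlt u v hc (hm.trans hc.le)
      rw [h] at this
      exact absurd this (lt_irrefl _)
    · exact hc
    · have := hlt v u hc hm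
      rw [h] at this
      exact absurd this (lt_irrefl _)
  have hIpc : ∀ v, T.m ≤ T.lv v → (T.lv v ∈ Ip ↔ T'.lv v ∈ Ip') := by
    intro v hm
    rw [hIp']
    constructor
    · intro h
      exact ⟨v, h, rfl⟩
    · rintro ⟨w2, hw1, hw2⟩
      have hmw : T.m ≤ T.lv w2 := (hIp hw1).2.1
      rwa [ceq w2 v hw2 hmw] at hw1
  have hplusc : ∀ v, T.lv v ∈ T.Iplus ↔ T'.lv v ∈ T'.Iplus := by
    intro v
    simp only [LevelWt.Iplus, Set.mem_setOf_eq]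
    constructor
    · rintro ⟨-, h2, h3⟩
      exact ⟨⟨v, rfl⟩, (hmm v).mp h2, (hnegv v).mp h3⟩
    · rintro ⟨-, h2, h3⟩
      exact ⟨⟨v, rfl⟩, (hmm v).mpr h2, (hnegv v).mpr h3⟩
  have hhat : T'.hatEdg = T.hatEdg := by
    ext v
    simp only [LevelWt.hatEdg, Set.mem_setOf_eq]
    exact and_congr_right fun _ => (hmlt (parent v)).symm
  have hmid : T'.Imid = T.Imid := by
    ext v
    simp only [LevelWt.Imid, Set.mem_setOf_eq, hhat]
    exact and_congr_right fun _ => (hltm v).symm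
  have hminus : T'.Iminus = T.Iminus := by
    ext v
    simp only [LevelWt.Iminus, Set.mem_setOf_eq]
    exact and_congr_right fun _ => (hlem (parent v)).symm
  have hQ : ∀ v, T.m < T.lv (parent v) →
      ((∀ x, (∃ u, T.lv u = x) → T.elv v ≤ x → x < T.lv (parent v) → x ∈ Ip) ↔
       (∀ x, (∃ u, T'.lv u = x) → T'.elv v ≤ x → x < T'.lv (parent v) → x ∈ Ip')) := by
    intro v hpm
    constructor
    · rintro h x ⟨u, rfl⟩ hle hlt2
      rw [LevelWt.elv, max_le_iff] at hle
      have hmu : T.m ≤ T.lv u := (hmm u).mpr hle.2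
      have h1' : T.lv v ≤ T.lv u := by
        by_contra hc
        push_neg at hc
        exact absurd (hlt v u hc (hmu.trans hc.le)) (not_lt.mpr hle.1)
      have h2' : T.lv u < T.lv (parent v) := clt (parent v) u hlt2 hpm.le
      have := h (T.lv u) ⟨u, rfl⟩ (by rw [LevelWt.elv]; exact max_le h1' hmu) h2'
      exact (hIpc u hmu).mp this
    · rintro h x ⟨u, rfl⟩ hle hlt2
      rw [LevelWt.elv, max_le_iff] at hle
      have hmu : T.m ≤ T.lv u := hle.2
      have h1' : T'.lv v ≤ T'.lv u := mle u v hle.1 hmu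
      have h2' : T'.lv u < T'.lv (parent v) := hlt (parent v) u hlt2 hpm.le
      have := h (T'.lv u) ⟨u, rfl⟩ (by rw [LevelWt.elv]; exact max_le h1' ((hmm u).mp hmu)) h2'
      exact (hIpc u hmu).mpr this
  have part1 : T'.contrSet Ip' Imm Imin = C := by
    rw [hC]
    ext v
    simp only [LevelWt.contrSet, Set.mem_union, Set.mem_setOf_eq, hhat, hmid]
    constructor
    · rintro (⟨h1', h2'⟩ | h)
      · left
        have hpm : T.m < T.lv (parent v) := by
          rcases h1' with h | h
          · exact h.1.2
          · exact (hImm h).1.2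
        exact ⟨h1', (hQ v hpm).mpr h2'⟩
      · right; exact h
    · rintro (⟨h1', h2'⟩ | h)
      · left
        have hpm : T.m < T.lv (parent v) := by
          rcases h1' with h | h
          · exact h.1.2
          · exact (hImm h).1.2
        exact ⟨h1', (hQ v hpm).mp h2'⟩
      · right; exact h
  have part2 : ∀ v' : c.V',
      (∑ u : V, Set.indicator {u | c.pr u = v'} T.wt u) =
        ∑ u : V, Set.indicator {u | c.pr u = v'} T'.wt u := by
    intro v'
    rw [hw]
  have hplusfin : T.Iplus.Finite := (Set.finite_range T.lv).subset fun x hx => hx.1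
  have hMIN : ∀ S S' : Set ℝ,
      (∀ v, T.lv v ∈ S → T.m ≤ T.lv v ∧ T'.lv v ∈ S') →
      (∀ x ∈ S', ∃ v, T'.lv v = x ∧ T.m ≤ T.lv v ∧ T.lv v ∈ S) →
      (∀ x ∈ S, ∃ v, T.lv v = x) →
      S.Finite →
      (S = ∅ ∧ S' = ∅) ∨
        ∃ w, T.m ≤ T.lv w ∧ T.lv w = sInf S ∧ T'.lv w = sInf S' := by
    intro S S' hfor hback hwit hfin
    rcases S.eq_empty_or_nonempty with hS | hS
    · left
      refine ⟨hS, Set.eq_empty_iff_forall_notMem.mpr fun x hx => ?_⟩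
      obtain ⟨v, -, -, hv⟩ := hback x hx
      rw [hS] at hv
      exact hv
    · right
      have hmem := hS.csInf_mem hfin
      obtain ⟨w, hwx⟩ := hwit _ hmem
      rw [← hwx] at hmem
      obtain ⟨hmw, hw'⟩ := hfor w hmem
      refine ⟨w, hmw, hwx, ?_⟩
      refine (IsLeast.csInf_eq ⟨hw', ?_⟩).symm
      rintro x hx
      obtain ⟨v, rfl, hmv, hv⟩ := hback x hx
      have hle2 := csInf_le hfin.bddBelow hv
      rw [← hwx] at hle2
      exact mle v w hle2 hmv
  have hdiag : ∀ v, T.lv v ∈ T.Iplus \ Ip → T.m ≤ T.lv v ∧ T'.lv v ∈ T'.Iplus \ Ip' := by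
    intro v hv
    have hmv : T.m ≤ T.lv v := hv.1.2.1
    exact ⟨hmv, (hplusc v).mp hv.1, fun hc => hv.2 ((hIpc v hmv).mpr hc)⟩
  have hdiag' : ∀ x ∈ T'.Iplus \ Ip',
      ∃ v, T'.lv v = x ∧ T.m ≤ T.lv v ∧ T.lv v ∈ T.Iplus \ Ip := by
    intro x hx
    obtain ⟨v, rfl⟩ := hx.1.1
    have hmv : T.m ≤ T.lv v := (hmm v).mpr hx.1.2.1
    exact ⟨v, rfl, hmv, (hplusc v).mpr hx.1, fun hc => hx.2 ((hIpc v hmv).mp hc)⟩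
  obtain ⟨wM, hwM1, hwM2, hwM3⟩ :
      ∃ w, T.m ≤ T.lv w ∧ T.lv w = sInf ((T.Iplus \ Ip) ∪ {0}) ∧
        T'.lv w = sInf ((T'.Iplus \ Ip') ∪ {0}) := by
    have harg1 : ∀ v, T.lv v ∈ (T.Iplus \ Ip) ∪ {0} →
        T.m ≤ T.lv v ∧ T'.lv v ∈ (T'.Iplus \ Ip') ∪ {0} := by
      intro v hv
      rcases hv with hv | hv
      · obtain ⟨ha, hb⟩ := hdiag v hv
        exact ⟨ha, Or.inl hb⟩
      · have hvr : v = root := (T.lv_zero v).mp hv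
        subst hvr
        refine ⟨by rw [hlvroot]; exact hmneg, Or.inr ?_⟩
        rw [hlvroot']
        rfl
    have harg2 : ∀ x ∈ (T'.Iplus \ Ip') ∪ {0},
        ∃ v, T'.lv v = x ∧ T.m ≤ T.lv v ∧ T.lv v ∈ (T.Iplus \ Ip) ∪ {0} := by
      intro x hx
      rcases hx with hx | hx
      · obtain ⟨v, rfl, ha, hb⟩ := hdiag' x hx
        exact ⟨v, rfl, ha, Or.inl hb⟩
      · refine ⟨root, ?_, by rw [hlvroot]; exact hmneg, Or.inr hlvroot⟩
        rw [hlvroot']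
        exact hx.symm
    have harg3 : ∀ x ∈ (T.Iplus \ Ip) ∪ {0}, ∃ v, T.lv v = x := by
      intro x hx
      rcases hx with hx | hx
      · exact hx.1.1
      · exact ⟨root, by rw [hlvroot]; exact hx.symm⟩
    have harg4 : ((T.Iplus \ Ip) ∪ {0} : Set ℝ).Finite :=
      (hplusfin.subset Set.diff_subset).union (Set.finite_singleton 0)
    rcases hMIN ((T.Iplus \ Ip) ∪ {0}) ((T'.Iplus \ Ip') ∪ {0}) harg1 harg2 harg3 harg4 with
      ⟨hS, -⟩ | h
    · exact absurd hS (Set.Nonempty.ne_empty ⟨0, Or.inr rfl⟩)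
    · exact h
  have hMge : T.m ≤ sInf ((T.Iplus \ Ip) ∪ {0}) := hwM2 ▸ hwM1
  have hM'ge : T'.m ≤ sInf ((T'.Iplus \ Ip') ∪ {0}) := hwM3 ▸ (hmm wM).mp hwM1
  have hrep0 : ∀ n (v : V), parent^[n] v = root →
      ∃ w, c.pr w = c.pr v ∧ (w = root ∨ (w ≠ root ∧ w ∉ C)) := by
    intro n
    induction n with
    | zero =>
      intro v hv
      exact ⟨v, rfl, Or.inl hv⟩
    | succ n ih =>
      intro v hv
      by_cases hvr : v = root
      · exact ⟨v, rfl, Or.inl hvr⟩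
      by_cases hvC : v ∈ C
      · obtain ⟨w, hw1, hw2⟩ := ih (parent v)
          (by rw [← Function.iterate_succ_apply]; exact hv)
        exact ⟨w, hw1.trans ((c.pr_eq_iff v hvr).mpr hvC).symm, hw2⟩
      · exact ⟨v, rfl, Or.inr ⟨hvr, hvC⟩⟩
  have key : ∀ a : c.V',
      (∃ v, T.m ≤ T.lv v ∧ T.lv v = lv1 a ∧ T'.lv v = lv2 a) ∨
      (lv1 a < sInf ((T.Iplus \ Ip) ∪ {0}) ∧ lv2 a < sInf ((T'.Iplus \ Ip') ∪ {0})) := by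
    intro a
    obtain ⟨v, hva⟩ := c.surj a
    obtain ⟨n, hn⟩ := hroot.2 v
    obtain ⟨w, hw1, hw2⟩ := hrep0 n v hn
    rw [hva] at hw1
    rcases hw2 with hwr | ⟨hwr, hwC⟩
    · rw [hwr] at hw1
      left
      refine ⟨root, by rw [hlvroot]; exact hmneg, ?_, ?_⟩
      · rw [hlvroot, ← hw1, c.pr_root, h1.1]
      · rw [hlvroot', ← hw1, c.pr_root, h2.1]
    · obtain ⟨hA1, hB1, hD1⟩ := h1.2 w hwr hwC
      obtain ⟨hA2, hB2, hD2⟩ := h2.2 w hwr hwC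
      rw [hw1] at hA1 hB1 hD1 hA2 hB2 hD2
      by_cases hB : w ∈ Imm
      · left
        rw [hB1 hB, hB2 hB]
        rcases hMIN (T.Iplus \ Ip) (T'.Iplus \ Ip') hdiag hdiag' (fun x hx => hx.1.1)
            (hplusfin.subset Set.diff_subset) with ⟨hS, hS'⟩ | hwit
        · rw [hS, hS', Real.sInf_empty]
          exact ⟨root, by rw [hlvroot]; exact hmneg, hlvroot, hlvroot'⟩
        · exact hwit
      by_cases hA : w ∈ T.hatEdg \ T.Imid
      · left
        rw [hA1 hA, hA2 (by rw [hhat, hmid]; exact hA)]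
        have harg1 : ∀ z, T.lv z ∈ {x | x ∈ T.Iplus \ Ip ∧ ∀ u, c.pr u = a → T.lv u ≤ x} →
            T.m ≤ T.lv z ∧
              T'.lv z ∈ {x | x ∈ T'.Iplus \ Ip' ∧ ∀ u, c.pr u = a → T'.lv u ≤ x} := by
          intro z hz
          obtain ⟨hmz, hz'⟩ := hdiag z hz.1
          exact ⟨hmz, hz', fun u hu => mle z u (hz.2 u hu) hmz⟩
        have harg2 : ∀ x ∈ {x | x ∈ T'.Iplus \ Ip' ∧ ∀ u, c.pr u = a → T'.lv u ≤ x},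
            ∃ z, T'.lv z = x ∧ T.m ≤ T.lv z ∧
              T.lv z ∈ {x | x ∈ T.Iplus \ Ip ∧ ∀ u, c.pr u = a → T.lv u ≤ x} := by
          intro x hx
          obtain ⟨z, rfl, hmz, hz⟩ := hdiag' x hx.1
          refine ⟨z, rfl, hmz, hz, fun u hu => ?_⟩
          by_contra hc
          push_neg at hc
          exact absurd (hlt u z hc (hmz.trans hc.le)) (not_lt.mpr (hx.2 u hu))
        have harg3 : ∀ x ∈ {x | x ∈ T.Iplus \ Ip ∧ ∀ u, c.pr u = a → T.lv u ≤ x},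
            ∃ v, T.lv v = x := fun x hx => hx.1.1.1
        have harg4 : {x | x ∈ T.Iplus \ Ip ∧ ∀ u, c.pr u = a → T.lv u ≤ x}.Finite :=
          hplusfin.subset fun x hx => hx.1.1
        rcases hMIN {x | x ∈ T.Iplus \ Ip ∧ ∀ u, c.pr u = a → T.lv u ≤ x}
            {x | x ∈ T'.Iplus \ Ip' ∧ ∀ u, c.pr u = a → T'.lv u ≤ x}
            harg1 harg2 harg3 harg4 with ⟨hS, hS'⟩ | hwit
        · rw [hS, hS', Real.sInf_empty]
          exact ⟨root, by rw [hlvroot]; exact hmneg, hlvroot, hlvroot'⟩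
        · exact hwit
      · have hD : w ∈ (T.Imid \ Imm) ∪ T.Iminus := by
          rcases le_or_gt (T.lv (parent w)) T.m with hple | hplt
          · exact Or.inr ⟨hwr, hple⟩
          · left
            refine ⟨?_, hB⟩
            by_contra hc
            exact hA ⟨⟨hwr, hplt⟩, hc⟩
        have hD' : w ∈ (T'.Imid \ Imm) ∪ T'.Iminus := by
          rw [hmid, hminus]
          exact hD
        rw [hD1 hD, hD2 hD']
        have hfinc : {x | ∃ u, c.pr u = a ∧ T.lv u = x}.Finite :=
          (Set.finite_range T.lv).subset (by rintro x ⟨u, -, h⟩; exact ⟨u, h⟩)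
        have hfinc' : {x | ∃ u, c.pr u = a ∧ T'.lv u = x}.Finite :=
          (Set.finite_range T'.lv).subset (by rintro x ⟨u, -, h⟩; exact ⟨u, h⟩)
        have hnec : {x | ∃ u, c.pr u = a ∧ T.lv u = x}.Nonempty := ⟨T.lv w, w, hw1, rfl⟩
        have hnec' : {x | ∃ u, c.pr u = a ∧ T'.lv u = x}.Nonempty := ⟨T'.lv w, w, hw1, rfl⟩
        obtain ⟨ws, hws1, hws2⟩ :
            sSup {x | ∃ u, c.pr u = a ∧ T.lv u = x} ∈ {x | ∃ u, c.pr u = a ∧ T.lv u = x} :=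
          hnec.csSup_mem hfinc
        by_cases hmws : T.m ≤ T.lv ws
        · left
          refine ⟨ws, hmws, hws2, ?_⟩
          have hgt : IsGreatest {x | ∃ u, c.pr u = a ∧ T'.lv u = x} (T'.lv ws) := by
            constructor
            · exact ⟨ws, hws1, rfl⟩
            · rintro x ⟨u, hu, rfl⟩
              have hle3 : T.lv u ≤ T.lv ws := by
                rw [hws2]
                exact le_csSup hfinc.bddAbove ⟨u, hu, rfl⟩
              exact mle ws u hle3 hmws
          exact hgt.csSup_eq.symm
        · right
          push_neg at hmws
          constructor
          · rw [← hws2]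
            exact hmws.trans_le hMge
          · obtain ⟨zs, hzs1, hzs2⟩ :
                sSup {x | ∃ u, c.pr u = a ∧ T'.lv u = x} ∈
                  {x | ∃ u, c.pr u = a ∧ T'.lv u = x} :=
              hnec'.csSup_mem hfinc'
            rw [← hzs2]
            have hz : T.lv zs < T.m := by
              have hle4 : T.lv zs ≤ sSup {x | ∃ u, c.pr u = a ∧ T.lv u = x} :=
                le_csSup hfinc.bddAbove ⟨zs, hzs1, rfl⟩
              rw [← hws2] at hle4
              exact hle4.trans_lt hmws
            exact (f2 zs hz).trans_le hM'ge
  refine ⟨part1, part2, ?_, ?_⟩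
  · intro a b hab hMa
    rcases key a with ⟨v, hv1, hv2, hv3⟩ | ⟨hv1, -⟩
    · rcases key b with ⟨u, hu1, hu2, hu3⟩ | ⟨hu1, -⟩
      · rw [← hv3, ← hu3]
        exact heq v u (by rw [hv2, hu2, hab]) hv1
      · exact absurd hMa (not_le.mpr (by rw [hab]; exact hu1))
    · exact absurd hMa (not_le.mpr hv1)
  · intro a b hba hMa
    rcases key a with ⟨v, hv1, hv2, hv3⟩ | ⟨hv1, -⟩
    · rcases key b with ⟨u, hu1, hu2, hu3⟩ | ⟨hu1, hu2⟩
      · rw [← hv3, ← hu3]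
        exact hlt v u (by rw [hv2, hu2]; exact hba) hv1
      · refine hu2.trans_le ?_
        rw [← hv3, ← hwM3]
        exact mle v wM (by rw [hwM2, hv2]; exact hMa) hv1
    · exact absurd hMa (not_le.mpr hv1)
end

section
/- Let γ be a rooted tree with edge tree order, and let 𝔖, 𝔖' be traverse sections with 𝔖 ≻ 𝔖' (i.e. 𝔖 ≠ 𝔖' and every e ∈ 𝔖 satisfies e ⪰ e' for some e' ∈ 𝔖'). Then for every minimal vertex v, the unique edge of 𝔖 on the path from o to v lies weakly above the unique edge of 𝔖' on that path. -/
open SimpleGraph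

variable {V : Type*}

/-- Tree order on edges: `e ≻ e'` iff, writing `e = s(a, b)` with `a ≻ b` and
`e' = s(c, d)` with `c ≻ d`, we have `b ⪰ c`. -/
def EdgeGT (G : SimpleGraph V) (o : V) (e e' : Sym2 V) : Prop :=
  ∃ a b c d, e = s(a, b) ∧ e' = s(c, d) ∧ TreeGT G o a b ∧ TreeGT G o c d ∧
    (TreeGT G o b c ∨ b = c)

/-- `e ⪰ e'` in the tree order on edges. -/
def EdgeGE (G : SimpleGraph V) (o : V) (e e' : Sym2 V) : Prop :=
  EdgeGT G o e e' ∨ e = e'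

/-- A minimal vertex: no vertex lies strictly below it in the tree order. -/
def IsMinVert (G : SimpleGraph V) (o v : V) : Prop :=
  ∀ u, ¬ TreeGT G o v u

/-- A traverse section: a subset of the edge set such that the path from the root to each
minimal vertex contains exactly one of its elements. -/
def IsTraverse (G : SimpleGraph V) (o : V) (S : Set (Sym2 V)) : Prop :=
  S ⊆ G.edgeSet ∧ ∀ v, IsMinVert G o v →
    ∀ p : G.Path o v, ∃! e, e ∈ (p : G.Walk o v).edges ∧ e ∈ S

/-- The induced order on traverse sections: `𝔖 ≻ 𝔖'` iff they differ and every edge of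
`𝔖` dominates some edge of `𝔖'`. -/
def SecGT (G : SimpleGraph V) (o : V) (S S' : Set (Sym2 V)) : Prop :=
  S ≠ S' ∧ ∀ e ∈ S, ∃ e' ∈ S', EdgeGE G o e e'

set_option linter.unusedSectionVars false

section Lemmas
variable [DecidableEq V] {G : SimpleGraph V} {o : V}

lemma walk_eq (hG : G.IsTree) {u w : V} {p q : G.Walk u w} (hp : p.IsPath) (hq : q.IsPath) :
    p = q := ((hG.existsUnique_path u w).unique hp hq)

lemma treeGT_of_mem (hG : G.IsTree) {u x : V} {q : G.Walk o u} (hq : q.IsPath)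
    (hx : x ∈ q.support) (hne : x ≠ u) : TreeGT G o x u :=
  ⟨hne, fun r => by rw [walk_eq hG r.2 hq]; exact hx⟩

lemma mem_of_treeGT {u x : V} {q : G.Walk o u} (hq : q.IsPath) (h : TreeGT G o x u) :
    x ∈ q.support := h.2 ⟨q, hq⟩

lemma not_end_mem_takeUntil {x y : V} {q : G.Walk o y} (hq : q.IsPath)
    (hx : x ∈ q.support) (hne : x ≠ y) : y ∉ (q.takeUntil x hx).support := by
  intro hy
  have hnodup := hq.2
  rw [← q.take_spec hx, Walk.support_append, List.nodup_append] at hnodup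
  have hy2 : y ∈ (q.dropUntil x hx).support.tail := by
    have := (q.dropUntil x hx).end_mem_support
    rw [(q.dropUntil x hx).support_eq_cons, List.mem_cons] at this
    rcases this with h | h
    · exact absurd h.symm hne
    · exact h
  exact hnodup.2.2 y hy y hy2 rfl

lemma treeGT_asymm (hG : G.IsTree) {x y : V} (hxy : TreeGT G o x y) : ¬ TreeGT G o y x := by
  intro hyx
  obtain ⟨q, hq, -⟩ := hG.existsUnique_path o y
  have hx : x ∈ q.support := mem_of_treeGT hq hxy
  have hy : y ∈ (q.takeUntil x hx).support := mem_of_treeGT (hq.takeUntil hx) hyx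
  exact not_end_mem_takeUntil hq hx hxy.1 hy

lemma treeGT_trans (hG : G.IsTree) {x y z : V} (hxy : TreeGT G o x y) (hyz : TreeGT G o y z) :
    TreeGT G o x z := by
  refine ⟨fun h => treeGT_asymm hG hyz (h ▸ hxy), fun r => ?_⟩
  have hy : y ∈ (r : G.Walk o z).support := hyz.2 r
  have hx : x ∈ ((r : G.Walk o z).takeUntil y hy).support :=
    mem_of_treeGT (r.2.takeUntil hy) hxy
  exact (r : G.Walk o z).support_takeUntil_subset hy hx

lemma edge_mem_of_adj (hG : G.IsTree) {u c d : V} {q : G.Walk o u} (hq : q.IsPath)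
    (hd : d ∈ q.support) (hcd : TreeGT G o c d) (hadj : G.Adj c d) : s(c, d) ∈ q.edges := by
  set r := q.takeUntil d hd with hr_def
  have hr : r.IsPath := hq.takeUntil hd
  have hc : c ∈ r.support := mem_of_treeGT hr hcd
  have hdn : d ∉ (r.takeUntil c hc).support := not_end_mem_takeUntil hr hc hcd.1
  have hpath : ((r.takeUntil c hc).concat hadj).IsPath := by
    rw [Walk.isPath_def, Walk.support_concat]
    simp only [List.concat_eq_append, List.nodup_append, List.nodup_cons, List.not_mem_nil,
      List.nodup_nil, List.mem_singleton, List.disjoint_singleton]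
    exact ⟨(hr.takeUntil hc).2, ⟨not_false_iff.2 trivial, trivial⟩,
      fun a ha b hb hab => hdn (by rw [hab, hb] at ha; exact ha)⟩
  have heq : r = (r.takeUntil c hc).concat hadj := walk_eq hG hr hpath
  have : s(c, d) ∈ r.edges := by
    rw [heq, Walk.edges_concat]
    simp
  exact q.edges_takeUntil_subset hd this

lemma edge_split {u v : V} {G : SimpleGraph V} (p : G.Walk u v) {e : Sym2 V}
    (he : e ∈ p.edges) :
    ∃ (a b : V) (q : G.Walk u a) (h : G.Adj a b) (r : G.Walk b v),
      e = s(a, b) ∧ p = q.append (Walk.cons h r) := by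
  induction p with
  | nil => simp at he
  | cons h' p' ih =>
    rw [Walk.edges_cons, List.mem_cons] at he
    rcases he with he | he
    · exact ⟨_, _, Walk.nil, h', p', he, rfl⟩
    · obtain ⟨a, b, q, h, r, he, hp⟩ := ih he
      exact ⟨a, b, Walk.cons h' q, h, r, he, by rw [hp, Walk.cons_append]⟩

lemma edge_decomp (hG : G.IsTree) {v : V} {q : G.Walk o v} (hq : q.IsPath) {e : Sym2 V}
    (he : e ∈ q.edges) :
    ∃ a b, e = s(a, b) ∧ TreeGT G o a b ∧ b ∈ q.support ∧
      ∀ x, TreeGT G o x b → x = a ∨ TreeGT G o x a := by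
  obtain ⟨a, b, q1, h, r, he, hp⟩ := edge_split q he
  have hq' : q = (q1.concat h).append r := by rw [hp, Walk.concat_append]
  have ht : (q1.concat h).IsPath := Walk.IsPath.of_append_left (hq' ▸ hq)
  have hq1 : q1.IsPath := Walk.IsPath.of_append_left (by rw [← Walk.concat_eq_append]; exact ht)
  have hasupp : a ∈ (q1.concat h).support := by
    rw [Walk.support_concat]
    simp
  have hab : TreeGT G o a b := treeGT_of_mem hG ht hasupp h.ne
  refine ⟨a, b, he, hab, ?_, ?_⟩
  · rw [hq', Walk.mem_support_append_iff]
    exact Or.inl (Walk.end_mem_support _)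
  · intro x hxb
    have hx : x ∈ (q1.concat h).support := mem_of_treeGT ht hxb
    rw [Walk.support_concat, List.mem_append, List.mem_singleton] at hx
    rcases hx with hx | hx
    · by_cases hxa : x = a
      · exact Or.inl hxa
      · exact Or.inr (treeGT_of_mem hG hq1 hx hxa)
    · exact absurd hx hxb.1

lemma treeGT_trichotomy (hG : G.IsTree) {v x y : V} {q : G.Walk o v} (hq : q.IsPath)
    (hx : x ∈ q.support) (hy : y ∈ q.support) :
    TreeGT G o x y ∨ x = y ∨ TreeGT G o y x := by
  obtain ⟨q1, r1, rfl⟩ := Walk.mem_support_iff_exists_append.mp hx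
  rw [Walk.mem_support_append_iff] at hy
  rcases hy with hy | hy
  · by_cases hxy : y = x
    · exact Or.inr (Or.inl hxy.symm)
    · exact Or.inr (Or.inr (treeGT_of_mem hG hq.of_append_left hy hxy))
  · obtain ⟨s, t, rfl⟩ := Walk.mem_support_iff_exists_append.mp hy
    have hqs : (q1.append s).IsPath :=
      Walk.IsPath.of_append_left (q := t) (by rw [Walk.append_assoc] at hq; exact hq)
    by_cases hxy : x = y
    · exact Or.inr (Or.inl hxy)
    · refine Or.inl (treeGT_of_mem hG hqs ?_ hxy)
      rw [Walk.mem_support_append_iff]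
      exact Or.inl (Walk.end_mem_support _)

lemma edge_total (hG : G.IsTree) {v : V} {q : G.Walk o v} (hq : q.IsPath) {e e' : Sym2 V}
    (he : e ∈ q.edges) (he' : e' ∈ q.edges) : EdgeGE G o e e' ∨ EdgeGT G o e' e := by
  obtain ⟨a, b, rfl, hab, hb, hpa⟩ := edge_decomp hG hq he
  obtain ⟨c, d, rfl, hcd, hd, hpc⟩ := edge_decomp hG hq he'
  rcases treeGT_trichotomy hG hq hb hd with hbd | hbd | hbd
  · rcases hpc b hbd with hbc | hbc
    · exact Or.inl (Or.inl ⟨a, b, c, d, rfl, rfl, hab, hcd, Or.inr hbc⟩)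
    · exact Or.inl (Or.inl ⟨a, b, c, d, rfl, rfl, hab, hcd, Or.inl hbc⟩)
  · subst hbd
    rcases hpc a hab with hac | hac
    · subst hac
      exact Or.inl (Or.inr rfl)
    · rcases hpa c hcd with hca | hca
      · exact absurd (hca ▸ hac) (fun h => h.1 rfl)
      · exact absurd hac (treeGT_asymm hG hca)
  · rcases hpa d hbd with hda | hda
    · exact Or.inr ⟨c, d, a, b, rfl, rfl, hcd, hab, Or.inr hda⟩
    · exact Or.inr ⟨c, d, a, b, rfl, rfl, hcd, hab, Or.inl hda⟩

lemma edgeGT_trans_ge (hG : G.IsTree) {e1 e2 e3 : Sym2 V} (h12 : EdgeGT G o e1 e2)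
    (h23 : EdgeGE G o e2 e3) : EdgeGT G o e1 e3 := by
  rcases h23 with h23 | rfl
  · obtain ⟨a1, b1, c1, d1, he1, he2, hab1, hcd1, h1⟩ := h12
    obtain ⟨a2, b2, c2, d2, he2', he3, hab2, hcd2, h2⟩ := h23
    rw [he2', Sym2.eq_iff] at he2
    rcases he2 with ⟨hc, hd⟩ | ⟨hc, hd⟩
    · subst hc; subst hd
      refine ⟨a1, b1, c2, d2, he1, he3, hab1, hcd2, ?_⟩
      have hb1b2 : TreeGT G o b1 b2 := by
        rcases h1 with h1 | h1
        · exact treeGT_trans hG h1 hab2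
        · exact h1 ▸ hab2
      rcases h2 with h2 | h2
      · exact Or.inl (treeGT_trans hG hb1b2 h2)
      · exact Or.inl (h2 ▸ hb1b2)
    · subst hc; subst hd
      exact absurd hab2 (treeGT_asymm hG hcd1)
  · exact h12

lemma exists_min_below (hG : G.IsTree) [Finite V] (d : V) :
    ∃ w, IsMinVert G o w ∧ (TreeGT G o d w ∨ d = w) := by
  haveI : IsTrans V (fun u w => TreeGT G o w u) :=
    ⟨fun a b c hba hcb => treeGT_trans hG hcb hba⟩
  haveI : IsIrrefl V (fun u w => TreeGT G o w u) := ⟨fun a h => h.1 rfl⟩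
  have wf : WellFounded (fun u w => TreeGT G o w u) :=
    Finite.wellFounded_of_trans_of_irrefl _
  obtain ⟨w, hw, hmin⟩ := wf.has_min {u | TreeGT G o d u ∨ d = u} ⟨d, Or.inr rfl⟩
  refine ⟨w, fun u hu => hmin u ?_ hu, hw⟩
  rcases hw with hw | rfl
  · exact Or.inl (treeGT_trans hG hw hu)
  · exact Or.inl hu

end Lemmas

/-- If `𝔖 ≻ 𝔖'` are traverse sections, then for every minimal vertex `v`, the edge of `𝔖`
on the path from the root to `v` lies weakly above the edge of `𝔖'` on that path. -/
theorem stmt19 [Fintype V] (G : SimpleGraph V) (hG : G.IsTree) (o : V)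
    (S S' : Set (Sym2 V)) (hS : IsTraverse G o S) (hS' : IsTraverse G o S')
    (hgt : SecGT G o S S') :
    ∀ v, IsMinVert G o v → ∀ p : G.Path o v,
      ∀ e ∈ (p : G.Walk o v).edges, e ∈ S →
        ∀ e' ∈ (p : G.Walk o v).edges, e' ∈ S' → EdgeGE G o e e' := by
  classical
  intro v hv p e heP heS e' he'P he'S
  have hq : (p : G.Walk o v).IsPath := p.2
  obtain ⟨f', hf'S', hEf⟩ := hgt.2 e heS
  rcases edge_total hG hq heP he'P with hge | hgt'
  · exact hge
  · have hE1 : EdgeGT G o e' f' := edgeGT_trans_ge hG hgt' hEf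
    obtain ⟨a1, b1, c, d, he'eq, hf'eq, hab1, hcd, hb1c⟩ := hE1
    have hadj_cd : G.Adj c d := (G.mem_edgeSet).1 (hf'eq ▸ hS'.1 hf'S')
    have hadj_ab : G.Adj a1 b1 := (G.mem_edgeSet).1 (he'eq ▸ hS'.1 he'S)
    obtain ⟨w, hwmin, hdw⟩ := exists_min_below (o := o) hG d
    obtain ⟨qw, hqw, -⟩ := hG.existsUnique_path o w
    have hdsupp : d ∈ qw.support := by
      rcases hdw with hdw | rfl
      · exact mem_of_treeGT hqw hdw
      · exact Walk.end_mem_support qw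
    have hf'q : f' ∈ qw.edges := by
      rw [hf'eq]; exact edge_mem_of_adj hG hqw hdsupp hcd hadj_cd
    have hcsupp : c ∈ qw.support := qw.fst_mem_support_of_mem_edges (hf'eq ▸ hf'q)
    have hb1supp : b1 ∈ qw.support := by
      rcases hb1c with hb1c | rfl
      · exact qw.support_takeUntil_subset hcsupp (mem_of_treeGT (hqw.takeUntil hcsupp) hb1c)
      · exact hcsupp
    have he'q : e' ∈ qw.edges := by
      rw [he'eq]; exact edge_mem_of_adj hG hqw hb1supp hab1 hadj_ab
    obtain ⟨e0, he0, hu⟩ := hS'.2 w hwmin ⟨qw, hqw⟩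
    have h1 : e' = e0 := hu e' ⟨he'q, he'S⟩
    have h2 : f' = e0 := hu f' ⟨hf'q, hf'S'⟩
    rw [h1.trans h2.symm]
    exact hEf
end
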